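/- arXiv:2208.00149 — 2 statements merged into one kernel-verified Lean document; each statement's English description precedes it below -/
import Mathlib

section
/- If a signed graph Σ contains a negative triangle, then bdim(Σ) ≥ 3; equivalently, no 2-switching function can switch a negative triangle to all positive. -/
open Finset

/-- The sign of a real number, as an integer. -/
noncomputable def sgnZ (x : ℝ) : ℤ := if 0 < x then 1 else if x < 0 then -1 else 0

/-- The standard inner product on `ℝ^k`. -/
def dotp {k : ℕ} (a b : Fin k → ℝ) : ℝ := ∑ i, a i * b i

/-- Membership in `Ω^k` where `Ω = {-1,0,1}`. -/
def InOmega {k : ℕ} (a : Fin k → ℝ) : Prop := ∀ i, a i = -1 ∨ a i = 0 ∨ a i = 1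

/-- `σ` is a sign function for the graph `G`: symmetric and `±1`-valued on edges,
so that `(G, σ)` is a signed graph. -/
def IsSignFn {V : Type*} (G : SimpleGraph V) (σ : V → V → ℤ) : Prop :=
  (∀ u v, σ u v = σ v u) ∧ ∀ u v, G.Adj u v → σ u v = 1 ∨ σ u v = -1

/-- `ζ : V → Ω^k` is a vector valued (`k`-)switching function for the signed graph:
`⟨ζ u, ζ v⟩ ≠ 0` for every edge `uv`. -/
def IsSwitching {V : Type*} (G : SimpleGraph V) {k : ℕ} (ζ : V → Fin k → ℝ) : Prop :=
  (∀ v, InOmega (ζ v)) ∧ ∀ u v, G.Adj u v → dotp (ζ u) (ζ v) ≠ 0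

/-- The sign function of the switched signed graph `Σ^ζ`:
`σ^ζ(uv) = σ(uv) · sgn ⟨ζ u, ζ v⟩`. -/
noncomputable def switchSign {V : Type*} (σ : V → V → ℤ) {k : ℕ} (ζ : V → Fin k → ℝ) : V → V → ℤ :=
  fun u v => σ u v * sgnZ (dotp (ζ u) (ζ v))

/-- `ζ : V → Ω^k` is a positive `k`-switching function (a `k`-positive function):
it switches `Σ` to the all positive signed graph. -/
def IsPositive {V : Type*} (G : SimpleGraph V) (σ : V → V → ℤ) {k : ℕ}
    (ζ : V → Fin k → ℝ) : Prop :=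
  (∀ v, InOmega (ζ v)) ∧ ∀ u v, G.Adj u v → switchSign σ ζ u v = 1

/-- The balancing dimension: the least `k ≥ 1` admitting a `k`-positive function. -/
noncomputable def bdim {V : Type*} (G : SimpleGraph V) (σ : V → V → ℤ) : ℕ :=
  sInf {k | 1 ≤ k ∧ ∃ ζ : V → Fin k → ℝ, IsPositive G σ ζ}

/-- The strong balancing dimension: the least `k ≥ 1` admitting an injective
`k`-positive function. -/
noncomputable def sbdim {V : Type*} (G : SimpleGraph V) (σ : V → V → ℤ) : ℕ :=
  sInf {k | 1 ≤ k ∧ ∃ ζ : V → Fin k → ℝ, Function.Injective ζ ∧ IsPositive G σ ζ}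

/-!
In `Ω²`, if `⟨x, y⟩ ≠ 0` then the two coordinate products `xᵢyᵢ ∈ Ω` cannot cancel, so
`sgn ⟨x, y⟩ = xᵢyᵢ` for every coordinate `i` in the common support of `x` and `y`. Three vectors
with pairwise nonzero inner products have pairwise intersecting supports in a two-element set,
hence a common coordinate `i`, and the product of the three signs is `(xᵢyᵢzᵢ)² = 1`. So a
`2`-positive function would make every triangle positive. For `bdim` to be `≥ 3` rather than the
junk value `sInf ∅ = 0`, some positive function must exist; padding with zeros preserves
positivity, so no positive function of dimension `1` exists either.
-/

lemma abs_le_one_of_inOmega {k : ℕ} {a : Fin k → ℝ} (ha : InOmega a) (i : Fin k) :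
    |a i| ≤ 1 := by
  rcases ha i with h | h | h <;> norm_num [h]

lemma abs_eq_one_of_inOmega {k : ℕ} {a : Fin k → ℝ} (ha : InOmega a) {i : Fin k}
    (hi : a i ≠ 0) : |a i| = 1 := by
  rcases ha i with h | h | h <;> simp_all

lemma sgnZ_add_of_abs_eq_one {p q : ℝ} (hp : |p| = 1) (hq : |q| ≤ 1) (hpq : p + q ≠ 0) :
    (sgnZ (p + q) : ℝ) = p := by
  obtain ⟨hq₁, hq₂⟩ := abs_le.mp hq
  rcases (abs_eq zero_le_one).mp hp with rfl | rfl
  · have : 0 < 1 + q := lt_of_le_of_ne (by linarith) (Ne.symm hpq)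
    simp [sgnZ, this]
  · have : -1 + q < 0 := lt_of_le_of_ne (by linarith) hpq
    simp [sgnZ, this, this.not_gt]

lemma exists_mul_ne_zero_of_dotp_ne_zero {k : ℕ} {a b : Fin k → ℝ} (h : dotp a b ≠ 0) :
    ∃ i, a i ≠ 0 ∧ b i ≠ 0 := by
  obtain ⟨i, -, hi⟩ := Finset.exists_ne_zero_of_sum_ne_zero h
  exact ⟨i, left_ne_zero_of_mul hi, right_ne_zero_of_mul hi⟩

lemma sgnZ_dotp_eq_mul_of_fin_two {x y : Fin 2 → ℝ} (hx : InOmega x) (hy : InOmega y)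
    (hxy : dotp x y ≠ 0) {i : Fin 2} (hxi : x i ≠ 0) (hyi : y i ≠ 0) :
    (sgnZ (dotp x y) : ℝ) = x i * y i := by
  have hi : |x i * y i| = 1 := by
    rw [abs_mul, abs_eq_one_of_inOmega hx hxi, abs_eq_one_of_inOmega hy hyi, one_mul]
  have hj : ∀ j, |x j * y j| ≤ 1 := fun j => by
    rw [abs_mul]
    exact mul_le_one₀ (abs_le_one_of_inOmega hx j) (abs_nonneg _) (abs_le_one_of_inOmega hy j)
  fin_cases i
  · simp only [dotp, Fin.sum_univ_two] at hxy ⊢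
    exact sgnZ_add_of_abs_eq_one hi (hj 1) hxy
  · simp only [dotp, Fin.sum_univ_two, add_comm (x 0 * y 0)] at hxy ⊢
    exact sgnZ_add_of_abs_eq_one hi (hj 0) hxy

lemma exists_common_support_of_fin_two {x y z : Fin 2 → ℝ} (hxy : dotp x y ≠ 0)
    (hyz : dotp y z ≠ 0) (hzx : dotp z x ≠ 0) : ∃ i, x i ≠ 0 ∧ y i ≠ 0 ∧ z i ≠ 0 := by
  obtain ⟨i, hxi, hyi⟩ := exists_mul_ne_zero_of_dotp_ne_zero hxy
  obtain ⟨j, hyj, hzj⟩ := exists_mul_ne_zero_of_dotp_ne_zero hyz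
  obtain ⟨l, hzl, hxl⟩ := exists_mul_ne_zero_of_dotp_ne_zero hzx
  have pigeonhole : ∀ i j l : Fin 2, i = j ∨ j = l ∨ l = i := by decide
  rcases pigeonhole i j l with rfl | rfl | rfl
  exacts [⟨i, hxi, hyi, hzj⟩, ⟨j, hxl, hyj, hzj⟩, ⟨l, hxl, hyi, hzl⟩]

lemma sgnZ_dotp_triangle_eq_one_of_fin_two {x y z : Fin 2 → ℝ} (hx : InOmega x)
    (hy : InOmega y) (hz : InOmega z) (hxy : dotp x y ≠ 0) (hyz : dotp y z ≠ 0)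
    (hzx : dotp z x ≠ 0) :
    sgnZ (dotp x y) * sgnZ (dotp y z) * sgnZ (dotp z x) = 1 := by
  obtain ⟨i, hxi, hyi, hzi⟩ := exists_common_support_of_fin_two hxy hyz hzx
  have hsq : ∀ {a : Fin 2 → ℝ}, InOmega a → a i ≠ 0 → a i ^ 2 = 1 := fun ha hai => by
    rw [← sq_abs, abs_eq_one_of_inOmega ha hai, one_pow]
  have h : ((sgnZ (dotp x y) * sgnZ (dotp y z) * sgnZ (dotp z x) : ℤ) : ℝ) = 1 := calc
    _ = x i * y i * (y i * z i) * (z i * x i) := by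
        push_cast
        rw [sgnZ_dotp_eq_mul_of_fin_two hx hy hxy hxi hyi,
          sgnZ_dotp_eq_mul_of_fin_two hy hz hyz hyi hzi,
          sgnZ_dotp_eq_mul_of_fin_two hz hx hzx hzi hxi]
    _ = x i ^ 2 * y i ^ 2 * z i ^ 2 := by ring
    _ = 1 := by rw [hsq hx hxi, hsq hy hyi, hsq hz hzi]; norm_num
  exact_mod_cast h

section Positive

variable {V : Type*} {G : SimpleGraph V} {σ : V → V → ℤ} {k : ℕ} {ζ : V → Fin k → ℝ}

lemma sgnZ_eq_and_ne_zero_of_mul_sgnZ_eq_one {s : ℤ} {d : ℝ} (h : s * sgnZ d = 1) :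
    sgnZ d = s ∧ d ≠ 0 := by
  refine ⟨(Int.eq_of_mul_eq_one h).symm, fun hd => ?_⟩
  simp [hd, sgnZ] at h

lemma IsPositive.isSwitching (hζ : IsPositive G σ ζ) : IsSwitching G ζ :=
  ⟨hζ.1, fun u v huv => (sgnZ_eq_and_ne_zero_of_mul_sgnZ_eq_one (hζ.2 u v huv)).2⟩

lemma IsPositive.sgnZ_dotp_eq (hζ : IsPositive G σ ζ) {u v : V} (huv : G.Adj u v) :
    sgnZ (dotp (ζ u) (ζ v)) = σ u v :=
  (sgnZ_eq_and_ne_zero_of_mul_sgnZ_eq_one (hζ.2 u v huv)).1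

lemma IsPositive.sign_triangle_eq_one_of_fin_two {ζ : V → Fin 2 → ℝ} (hζ : IsPositive G σ ζ)
    {a b c : V} (hab : G.Adj a b) (hbc : G.Adj b c) (hca : G.Adj c a) :
    σ a b * σ b c * σ c a = 1 := by
  rw [← hζ.sgnZ_dotp_eq hab, ← hζ.sgnZ_dotp_eq hbc, ← hζ.sgnZ_dotp_eq hca]
  exact sgnZ_dotp_triangle_eq_one_of_fin_two (hζ.1 a) (hζ.1 b) (hζ.1 c)
    (hζ.isSwitching.2 a b hab) (hζ.isSwitching.2 b c hbc) (hζ.isSwitching.2 c a hca)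

lemma dotp_append_zero {n : ℕ} (a b : Fin k → ℝ) :
    dotp (Fin.append a (0 : Fin n → ℝ)) (Fin.append b 0) = dotp a b := by
  simp [dotp, Fin.sum_univ_add]

lemma InOmega.append_zero {a : Fin k → ℝ} (ha : InOmega a) (n : ℕ) :
    InOmega (Fin.append a (0 : Fin n → ℝ)) := by
  intro i
  refine Fin.addCases (fun j => ?_) (fun j => ?_) i
  · simpa using ha j
  · simp

lemma IsPositive.append_zero (hζ : IsPositive G σ ζ) (n : ℕ) :
    IsPositive G σ (fun v => Fin.append (ζ v) (0 : Fin n → ℝ)) :=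
  ⟨fun v => (hζ.1 v).append_zero n, fun u v huv => by
    simpa only [switchSign, dotp_append_zero] using hζ.2 u v huv⟩

lemma lt_bdim_of_not_exists_isPositive {m : ℕ} (hex : ∃ k, ∃ ζ : V → Fin k → ℝ, IsPositive G σ ζ)
    (hm : ¬ ∃ ζ : V → Fin m → ℝ, IsPositive G σ ζ) : m < bdim G σ := by
  obtain ⟨k₀, ζ₀, hζ₀⟩ := hex
  rw [bdim, Nat.lt_iff_add_one_le]
  refine le_csInf ⟨k₀ + 1, by omega, _, hζ₀.append_zero 1⟩ ?_
  rintro k ⟨-, ζ, hζ⟩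
  by_contra! hkm
  obtain ⟨n, rfl⟩ := Nat.exists_eq_add_of_le (Nat.le_of_lt_succ hkm)
  exact hm ⟨_, hζ.append_zero n⟩

end Positive

section Witness

variable {V : Type*} (G : SimpleGraph V) (σ : V → V → ℤ)

/- Coordinates are indexed by ordered pairs of vertices. For an edge `uv`, the vectors of `u`
and `v` share exactly the coordinates `(u, v)` and `(v, u)`, each contributing `σ(uv)`. -/
open Classical in
noncomputable def edgeVector (u : V) (pq : V × V) : ℝ :=
  if u = pq.1 then 1 else if u = pq.2 ∧ G.Adj pq.1 pq.2 then σ pq.1 pq.2 else 0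

variable {G σ}

lemma edgeVector_eq_neg_one_or_zero_or_one (hσ : IsSignFn G σ) (u : V) (pq : V × V) :
    edgeVector G σ u pq = -1 ∨ edgeVector G σ u pq = 0 ∨ edgeVector G σ u pq = 1 := by
  unfold edgeVector
  split_ifs with h₁ h₂
  · simp
  · rcases hσ.2 _ _ h₂.2 with h | h <;> simp [h]
  · simp

lemma mem_of_edgeVector_ne_zero {u : V} {pq : V × V} (h : edgeVector G σ u pq ≠ 0) :
    u = pq.1 ∨ u = pq.2 := by
  unfold edgeVector at h
  split_ifs at h with h₁ h₂
  exacts [.inl h₁, .inr h₂.1, absurd rfl h]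

lemma sum_edgeVector_mul_edgeVector [Fintype V] (hsymm : ∀ u v, σ u v = σ v u) {u v : V}
    (huv : G.Adj u v) :
    ∑ pq, edgeVector G σ u pq * edgeVector G σ v pq = 2 * σ u v := by
  have hne := G.ne_of_adj huv
  rw [Fintype.sum_eq_add (u, v) (v, u) (by simp [hne])]
  · simp [edgeVector, hne, hne.symm, huv, huv.symm, hsymm v u, two_mul]
  · rintro ⟨p, q⟩ ⟨h₁, h₂⟩
    by_contra h
    rcases mem_of_edgeVector_ne_zero (left_ne_zero_of_mul h) with rfl | rfl <;>
      rcases mem_of_edgeVector_ne_zero (right_ne_zero_of_mul h) with rfl | rfl <;>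
      simp_all

lemma exists_isPositive [Fintype V] (hσ : IsSignFn G σ) :
    ∃ k, ∃ ζ : V → Fin k → ℝ, IsPositive G σ ζ := by
  let e := Fintype.equivFin (V × V)
  refine ⟨_, fun u i => edgeVector G σ u (e.symm i),
    fun u i => edgeVector_eq_neg_one_or_zero_or_one hσ u _, fun u v huv => ?_⟩
  have hdot : dotp (fun i => edgeVector G σ u (e.symm i)) (fun i => edgeVector G σ v (e.symm i))
      = 2 * σ u v := by
    rw [dotp, e.symm.sum_comp (fun pq => edgeVector G σ u pq * edgeVector G σ v pq)]
    exact sum_edgeVector_mul_edgeVector hσ.1 huv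
  rw [switchSign, hdot]
  rcases hσ.2 u v huv with h | h <;> norm_num [h, sgnZ]

end Witness

/-- If `Σ` contains a negative triangle, then `bdim(Σ) ≥ 3`; equivalently, no
`2`-switching function can switch `Σ` to all positive. -/
theorem bdim_ge_three_of_negative_triangle {V : Type*} [Fintype V] (G : SimpleGraph V)
    (σ : V → V → ℤ) (hσ : IsSignFn G σ) (a b c : V)
    (hab : G.Adj a b) (hbc : G.Adj b c) (hca : G.Adj c a)
    (hneg : σ a b * σ b c * σ c a = -1) :
    3 ≤ bdim G σ ∧ ¬ ∃ ζ : V → Fin 2 → ℝ, IsPositive G σ ζ := by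
  have hno : ¬ ∃ ζ : V → Fin 2 → ℝ, IsPositive G σ ζ := fun ⟨ζ, hζ⟩ => by
    have := hζ.sign_triangle_eq_one_of_fin_two hab hbc hca
    omega
  exact ⟨lt_bdim_of_not_exists_isPositive (exists_isPositive hσ) hno, hno⟩
end

section
/- For an unbalanced cycle C_n^- with n > 3, the balancing dimension is 2. -/
open Finset

lemma sgnZ_eq_one_iff {x : ℝ} : sgnZ x = 1 ↔ 0 < x := by
  unfold sgnZ; split_ifs with h1 h2 <;> simp_all

lemma sgnZ_eq_negone_iff {x : ℝ} : sgnZ x = -1 ↔ x < 0 := by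
  unfold sgnZ; split_ifs with h1 h2 <;> simp_all <;> linarith

lemma dvdfact {n k : ℕ} (h : (k : ZMod n) = 0) : n ∣ k :=
  (ZMod.natCast_eq_zero_iff k n).mp h

/-- For an unbalanced cycle `Cₙ⁻` with `n > 3` (taken with exactly one negative
edge `vₙv₁`), the balancing dimension is `2`. -/
theorem bdim_unbalanced_cycle {n : ℕ} (hn : 3 < n) (G : SimpleGraph (ZMod n))
    (hG : ∀ u v, G.Adj u v ↔ u - v = 1 ∨ v - u = 1)
    (σ : ZMod n → ZMod n → ℤ)
    (hσ : ∀ u v, σ u v = if (u = -1 ∧ v = 0) ∨ (u = 0 ∧ v = -1) then -1 else 1) :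
    bdim G σ = 2 := by
  classical
  have key : ∀ k : ℕ, 0 < k → k < n → ((k : ZMod n) ≠ 0) := by
    intro k h1 h2 h
    have := Nat.le_of_dvd h1 (dvdfact h)
    omega
  have hne1 : ((1 : ℕ) : ZMod n) ≠ 0 := key 1 (by omega) (by omega)
  have hne2 : ((2 : ℕ) : ZMod n) ≠ 0 := key 2 (by omega) (by omega)
  have hne3 : ((3 : ℕ) : ZMod n) ≠ 0 := key 3 (by omega) (by omega)
  push_cast at hne1 hne2 hne3
  have h1m : (1 : ZMod n) ≠ -1 := fun h => hne2 (by linear_combination h)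
  have h2m : (1 + 1 : ZMod n) ≠ -1 := fun h => hne3 (by linear_combination h)
  have hm0 : (-1 : ZMod n) ≠ 0 := fun h => hne1 (by linear_combination -h)
  have hm1 : (-1 : ZMod n) ≠ 1 := fun h => h1m h.symm
  have h21 : (1 + 1 : ZMod n) ≠ 1 := fun h => hne1 (by linear_combination h)
  have h20 : (1 + 1 : ZMod n) ≠ 0 := fun h => hne2 (by linear_combination h)
  have σsymm : ∀ u v, σ u v = σ v u := by
    intro u v; rw [hσ u v, hσ v u]; split_ifs <;> tauto
  have dsymm : ∀ {k : ℕ} (a b : Fin k → ℝ), dotp a b = dotp b a := by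
    intro k a b; unfold dotp; exact Finset.sum_congr rfl (fun i _ => mul_comm _ _)
  -- the 2-positive function
  set ζ2 : ZMod n → Fin 2 → ℝ := fun v =>
    if v = 0 then ![1, 0] else if v = 1 then ![1, 1] else if v = -1 then ![-1, 1]
    else ![0, 1] with hζ2
  have z0 : ζ2 0 = ![1, 0] := by simp [hζ2]
  have z1 : ζ2 1 = ![1, 1] := by simp [hζ2, hne1]
  have zm : ζ2 (-1) = ![-1, 1] := by simp [hζ2, hm0, hm1]
  have zo : ∀ v, v ≠ 0 → v ≠ 1 → v ≠ -1 → ζ2 v = ![0, 1] := by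
    intro v a b c; simp [hζ2, a, b, c]
  have dcalc : ∀ a b : Fin 2 → ℝ, dotp a b = a 0 * b 0 + a 1 * b 1 := by
    intro a b; simp [dotp, Fin.sum_univ_two]
  have hΩ : ∀ v, InOmega (ζ2 v) := by
    intro v i
    simp only [hζ2]
    split_ifs <;> fin_cases i <;> norm_num
  have hedge : ∀ u : ZMod n, switchSign σ ζ2 u (u + 1) = 1 := by
    intro u
    unfold switchSign
    rcases eq_or_ne u 0 with rfl | hu0
    · rw [zero_add, z0, z1, dcalc, hσ,
        if_neg (by rintro (⟨-, h⟩ | ⟨-, h⟩); exacts [hne1 h, h1m h])]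
      norm_num [sgnZ_eq_one_iff]
    rcases eq_or_ne u 1 with rfl | hu1
    · rw [z1, zo (1 + 1) h20 h21 h2m, dcalc, hσ,
        if_neg (by rintro (⟨h, -⟩ | ⟨h, -⟩); exacts [h1m h, hne1 h])]
      norm_num [sgnZ_eq_one_iff]
    rcases eq_or_ne u (-1) with rfl | hum
    · rw [neg_add_cancel, zm, z0, dcalc, hσ, if_pos (Or.inl ⟨rfl, rfl⟩)]
      have : sgnZ ((-1) * 1 + 1 * 0 : ℝ) = -1 := sgnZ_eq_negone_iff.mpr (by norm_num)
      norm_num at this ⊢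
      rw [this]; ring
    · have hv0 : u + 1 ≠ 0 := fun h => hum (by linear_combination h)
      have hv1 : u + 1 ≠ 1 := fun h => hu0 (by linear_combination h)
      have hσ1 : σ u (u + 1) = 1 := by
        rw [hσ]; exact if_neg (by rintro (⟨h, -⟩ | ⟨h, -⟩); exacts [hum h, hu0 h])
      rcases eq_or_ne (u + 1) (-1) with hvm | hvm
      · rw [hσ1, zo u hu0 hu1 hum, hvm, zm, dcalc]
        norm_num [sgnZ_eq_one_iff]
      · rw [hσ1, zo u hu0 hu1 hum, zo (u + 1) hv0 hv1 hvm, dcalc]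
        norm_num [sgnZ_eq_one_iff]
  have hswsymm : ∀ u v, switchSign σ ζ2 u v = switchSign σ ζ2 v u := by
    intro u v; unfold switchSign; rw [σsymm, dsymm]
  have hpos : IsPositive G σ ζ2 := by
    refine ⟨hΩ, ?_⟩
    intro u v hadj
    rw [hG] at hadj
    rcases hadj with h | h
    · have huv : u = v + 1 := by linear_combination h
      rw [huv, hswsymm]; exact hedge v
    · have hvu : v = u + 1 := by linear_combination h
      rw [hvu]; exact hedge u
  -- no 1-positive function
  have hno1 : ∀ ζ : ZMod n → Fin 1 → ℝ, ¬ IsPositive G σ ζ := by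
    rintro ζ ⟨_, hE⟩
    set f : ZMod n → ℝ := fun v => ζ v 0 with hf
    have d1 : ∀ u v : ZMod n, dotp (ζ u) (ζ v) = f u * f v := by
      intro u v; simp [dotp, Fin.sum_univ_one, hf]
    have hadjm : G.Adj (-1) 0 := by rw [hG]; right; ring
    have hneg : f (-1) * f 0 < 0 := by
      have hEm := hE (-1) 0 hadjm
      unfold switchSign at hEm
      rw [hσ, if_pos (Or.inl ⟨rfl, rfl⟩)] at hEm
      have hs : sgnZ (dotp (ζ (-1)) (ζ 0)) = -1 := by omega
      rw [d1] at hs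
      exact sgnZ_eq_negone_iff.mp hs
    have hf0 : f 0 ≠ 0 := fun h => by rw [h, mul_zero] at hneg; exact lt_irrefl 0 hneg
    have hstep : ∀ k : ℕ, k + 1 ≤ n - 1 → 0 < f (k : ZMod n) * f ((k : ZMod n) + 1) := by
      intro k hk
      have hadj : G.Adj (k : ZMod n) ((k : ZMod n) + 1) := by rw [hG]; right; ring
      have hσ1 : σ (k : ZMod n) ((k : ZMod n) + 1) = 1 := by
        rw [hσ, if_neg]
        rintro (⟨ha, hb⟩ | ⟨ha, hb⟩)
        · have hz : ((k + 1 : ℕ) : ZMod n) = 0 := by push_cast; linear_combination ha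
          have := Nat.le_of_dvd (by omega) (dvdfact hz)
          omega
        · have hk0 : k = 0 := Nat.eq_zero_of_dvd_of_lt (dvdfact ha) (by omega)
          subst hk0
          exact h1m (by simpa using hb)
      have hEk := hE _ _ hadj
      unfold switchSign at hEk
      rw [hσ1, one_mul, d1] at hEk
      exact sgnZ_eq_one_iff.mp hEk
    have hall : ∀ k : ℕ, k ≤ n - 1 → 0 < f (k : ZMod n) * f 0 := by
      intro k
      induction k with
      | zero => intro _; simpa using mul_self_pos.mpr hf0
      | succ k ih =>
        intro hk
        have h1 := hstep k (by omega)
        have h2 := ih (by omega)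
        have hcast : ((k + 1 : ℕ) : ZMod n) = (k : ZMod n) + 1 := by push_cast; ring
        rw [hcast]
        nlinarith [mul_pos h1 h2, sq_nonneg (f (k : ZMod n))]
    have hlast := hall (n - 1) le_rfl
    have hcast : ((n - 1 : ℕ) : ZMod n) = -1 := by
      rw [Nat.cast_sub (by omega : 1 ≤ n), Nat.cast_one, ZMod.natCast_self]; ring
    rw [hcast] at hlast
    linarith
  have h2mem : 2 ∈ {k | 1 ≤ k ∧ ∃ ζ : ZMod n → Fin k → ℝ, IsPositive G σ ζ} :=
    ⟨by norm_num, ζ2, hpos⟩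
  unfold bdim
  refine le_antisymm (Nat.sInf_le h2mem) (le_csInf ⟨2, h2mem⟩ ?_)
  rintro k ⟨hk1, ζ, hζp⟩
  by_contra hlt
  push_neg at hlt
  interval_cases k
  exact hno1 ζ hζp
end
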